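/- Let s ≥ 1 and suppose the identity sequence id(k) = k belongs to D(A^s) and that (A^s id)(l) = β₀ + β₁ l for all l ∈ ℕ, where β₀, β₁ ∈ ℝ. Then β₁ > 0 and β₀ > 0. -/

import Mathlib

/-!
Averaging over the tail `k ≥ l` against the positive weights `p_k` can only raise a sequence that
dominates the identity, and it raises it strictly at `l`, since the tail contains `k = l + 1 > l`.
Hence `A^s id(l) > l` for every `l`, and an affine function `β₀ + β₁ l` exceeding `l` at every
`l ∈ ℕ` has `β₀ > 0` (take `l = 0`) and `β₁ > 0` (otherwise it would be bounded by `β₀`).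
-/

open scoped BigOperators

noncomputable section

/-- Tail sum `q_l = Σ_{k ≥ l} p_k`. -/
def qtail (p : ℕ → ℝ) (l : ℕ) : ℝ := ∑' k, p (l + k)

/-- The operator `A` on real sequences: `(A v)(l) = (1/q_l) Σ_{k=l}^∞ p_k v(k)`. -/
def opAR (p : ℕ → ℝ) (v : ℕ → ℝ) : ℕ → ℝ :=
  fun l => (1 / qtail p l) * ∑' k, p (l + k) * v (l + k)

/-- Membership in the domain `D(A) = {v : Σ_k p_k |v(k)| < ∞}` (real sequences). -/
def memDAR (p : ℕ → ℝ) (v : ℕ → ℝ) : Prop :=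
  Summable fun k => p k * |v k|

/-- Membership in the domain `D(A^m) = {v : A^k v ∈ D(A) for k = 0,…,m-1}`. -/
def memDAiterR (p : ℕ → ℝ) (m : ℕ) (v : ℕ → ℝ) : Prop :=
  ∀ k < m, memDAR p ((opAR p)^[k] v)

section TailAverage

variable {p : ℕ → ℝ}

lemma qtail_pos (hp : ∀ k, 0 < p k) (hsum : Summable p) (l : ℕ) : 0 < qtail p l :=
  (hsum.comp_injective (add_right_injective l)).tsum_pos (fun _ => (hp _).le) 0 (hp _)

lemma memDAR.summable_mul_shift (hp : ∀ k, 0 < p k) {w : ℕ → ℝ} (hw : memDAR p w) (l : ℕ) :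
    Summable fun k => p (l + k) * w (l + k) :=
  ((hw.comp_injective (add_right_injective l)).congr fun _ => by
    rw [Function.comp_apply, abs_mul, abs_of_pos (hp _)]).of_abs

lemma lt_opAR_of_le (hp : ∀ k, 0 < p k) (hsum : Summable p) {w : ℕ → ℝ} (hw : memDAR p w)
    (hge : ∀ k : ℕ, (k : ℝ) ≤ w k) (l : ℕ) : (l : ℝ) < opAR p w l := by
  have hq := qtail_pos hp hsum l
  have hle : ∀ k : ℕ, (l : ℝ) * p (l + k) ≤ p (l + k) * w (l + k) := fun k => by
    rw [mul_comm]
    have : (l : ℝ) ≤ (l + k : ℕ) := by exact_mod_cast l.le_add_right k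
    exact mul_le_mul_of_nonneg_left (this.trans (hge _)) (hp _).le
  have hlt : (l : ℝ) * p (l + 1) < p (l + 1) * w (l + 1) := by
    rw [mul_comm]
    have : (l : ℝ) < (l + 1 : ℕ) := by exact_mod_cast l.lt_succ_self
    exact mul_lt_mul_of_pos_left (this.trans_le (hge _)) (hp _)
  have key : (l : ℝ) * qtail p l < ∑' k, p (l + k) * w (l + k) :=
    calc (l : ℝ) * qtail p l = ∑' k, (l : ℝ) * p (l + k) := tsum_mul_left.symm
      _ < _ := Summable.tsum_lt_tsum hle hlt
        ((hsum.comp_injective (add_right_injective l)).mul_left _)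
        (hw.summable_mul_shift hp l)
  calc (l : ℝ) = 1 / qtail p l * ((l : ℝ) * qtail p l) := by field_simp
    _ < opAR p w l := mul_lt_mul_of_pos_left key (by positivity)

lemma le_iterate_opAR (hp : ∀ k, 0 < p k) (hsum : Summable p) :
    ∀ {m : ℕ}, memDAiterR p m (fun k => (k : ℝ)) →
      ∀ l : ℕ, (l : ℝ) ≤ (opAR p)^[m] (fun k => (k : ℝ)) l
  | 0, _, l => le_rfl
  | m + 1, hid, l => by
    rw [Function.iterate_succ_apply']
    exact (lt_opAR_of_le hp hsum (hid m m.lt_succ_self)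
      (le_iterate_opAR hp hsum fun k hk => hid k (by omega)) l).le

lemma lt_iterate_succ_opAR (hp : ∀ k, 0 < p k) (hsum : Summable p) {m : ℕ}
    (hid : memDAiterR p (m + 1) (fun k => (k : ℝ))) (l : ℕ) :
    (l : ℝ) < (opAR p)^[m + 1] (fun k => (k : ℝ)) l := by
  rw [Function.iterate_succ_apply']
  exact lt_opAR_of_le hp hsum (hid m m.lt_succ_self)
    (le_iterate_opAR hp hsum fun k hk => hid k (by omega)) l

end TailAverage

lemma pos_of_forall_natCast_lt_affine {β₀ β₁ : ℝ} (h : ∀ l : ℕ, (l : ℝ) < β₀ + β₁ * l) :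
    0 < β₁ ∧ 0 < β₀ := by
  refine ⟨?_, by simpa using h 0⟩
  by_contra! hβ₁
  obtain ⟨n, hn⟩ := exists_nat_gt β₀
  nlinarith [h n, (n.cast_nonneg : (0 : ℝ) ≤ n)]

/-- If `A^s id` is the affine function `l ↦ β₀ + β₁ l`, then `β₁ > 0` and `β₀ > 0`. -/
theorem regression_coefficients_positive
    (p : ℕ → ℝ) (hp : ∀ k, 0 < p k) (hsum : HasSum p 1)
    (s : ℕ) (hs : 1 ≤ s) (β₀ β₁ : ℝ)
    (hid : memDAiterR p s (fun k => (k : ℝ)))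
    (hlin : ∀ l : ℕ, ((opAR p)^[s] (fun k => (k : ℝ))) l = β₀ + β₁ * l) :
    0 < β₁ ∧ 0 < β₀ := by
  obtain ⟨t, rfl⟩ := Nat.exists_eq_add_of_le' hs
  exact pos_of_forall_natCast_lt_affine fun l =>
    hlin l ▸ lt_iterate_succ_opAR hp hsum.summable hid l
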